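/- Let ρ > 0 and let Z = {Z_n}_{n≥1} be a triangular family with Z_n contained in the closed unit disk for every n. If Z is ρ-interpolating, then Z is uniformly separated: there exists s > 0 such that |z − w| > s/√n for any two distinct points z, w ∈ Z_n and all n. -/

import Mathlib

open MeasureTheory Filter

/-- Normalized area measure on `ℂ`: `dA = (1/π)·(Lebesgue measure)`. -/
noncomputable def dA : Measure ℂ := (ENNReal.ofReal (1 / Real.pi)) • (volume : Measure ℂ)

/-- `f` is a weighted polynomial in `H̃_k` for the Ginibre potential:
`f(z) = p(z) e^{-k|z|²/2}` with `p` a polynomial of degree at most `k-1`. -/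
def MemHtilde (k : ℕ) (f : ℂ → ℂ) : Prop :=
  ∃ p : Polynomial ℂ, p.degree < (k : ℕ) ∧
    ∀ z : ℂ, f z = p.eval z * Complex.exp (-(k : ℂ) * (‖z‖ : ℂ) ^ 2 / 2)

/-- The index `k` of the space `H̃_{ρn}`: `k = ρn` when `ρn` is an integer, and
`k = ⌊ρn⌋` otherwise; in both cases `k = ⌊ρn⌋`. -/
noncomputable def HkIdx (ρ : ℝ) (n : ℕ) : ℕ := ⌊ρ * n⌋₊

/-- The triangular family `Z` is `ρ`-interpolating: any set of values at the points of
`Z_n` can be interpolated by an `f ∈ H̃_{ρn}` with `‖f‖² ≤ (C/(nρ)) Σ_j |c_j|²`. -/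
def IsInterpolating (ρ : ℝ) (Z : ℕ → Finset ℂ) : Prop :=
  ∃ C : ℝ, ∀ n : ℕ, 1 ≤ n → ∀ c : ℂ → ℂ, ∃ f : ℂ → ℂ,
    MemHtilde (HkIdx ρ n) f ∧ (∀ z ∈ Z n, f z = c z) ∧
    (∫ z, ‖f z‖ ^ 2 ∂dA) ≤ C / (n * ρ) * ∑ z ∈ Z n, ‖c z‖ ^ 2

/-!
Interpolate the values `1` at `z` and `0` at the other points of `Z_n` by `f ∈ H̃_k`, `k ≤ ρn`,
with `‖f‖² ≤ C/(nρ)`. For every centre `ζ`, `|f(u)| e^{k|u-ζ|²/2}` is the modulus of an entire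
function `g`. The sub-mean value property of `|g|²` on the disc of radius `1/√k` about `ζ` gives
`|f(ζ)|² ≤ e k ‖f‖²`, so `|f|² ≤ e C` everywhere. Centring at `w` instead, `g` vanishes at `w`,
and the Schwarz lemma for `g²` on that disc gives `1 = |f(z)|² ≤ |g(z)|² ≲ C √k |z - w|`,
that is `|z - w| ≳ 1/√n`.
-/

open Set Metric Real ComplexConjugate

section PolarCoordinates

variable {E : Type*} [NormedAddCommGroup E] [NormedSpace ℝ E]

theorem setIntegral_ball_zero_eq_setIntegral_polar (f : ℂ → E) (R : ℝ) :
    ∫ z in ball 0 R, f z = ∫ p in Ioo 0 R ×ˢ Ioo (-π) π, p.1 • f (circleMap 0 p.1 p.2) := by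
  have hS : Ioo 0 R ×ˢ Ioo (-π) π ⊆ polarCoord.target := by
    rw [polarCoord_target]
    exact prod_mono Ioo_subset_Ioi_self subset_rfl
  rw [← integral_indicator measurableSet_ball, ← Complex.integral_comp_polarCoord_symm,
    ← inter_eq_right.mpr hS, ← setIntegral_indicator (measurableSet_Ioo.prod measurableSet_Ioo)]
  refine setIntegral_congr_fun polarCoord.open_target.measurableSet fun p hp => ?_
  rw [polarCoord_target] at hp
  have hp₁ : 0 < p.1 := hp.1
  have h_symm : Complex.polarCoord.symm p = circleMap 0 p.1 p.2 := by
    simp [Complex.polarCoord_symm_apply, circleMap_zero, Complex.exp_mul_I]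
  have h_mem : Complex.polarCoord.symm p ∈ ball 0 R ↔ p ∈ Ioo 0 R ×ˢ Ioo (-π) π := by
    simp [abs_of_pos hp₁, hp₁, hp.2]
  by_cases hpR : p ∈ Ioo 0 R ×ˢ Ioo (-π) π
  · rw [indicator_of_mem (h_mem.mpr hpR), indicator_of_mem hpR, h_symm]
  · rw [indicator_of_notMem (mt h_mem.mp hpR), indicator_of_notMem hpR, smul_zero]

theorem setIntegral_Ioo_circleMap_eq_circleAverage (f : ℂ → E) (c : ℂ) (r : ℝ) :
    ∫ θ in Ioo (-π) π, f (circleMap c r θ) = (2 * π) • circleAverage f c r := by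
  have h_per : Function.Periodic (fun θ => f (circleMap c r θ)) (2 * π) := fun θ => by
    simp [periodic_circleMap c r θ]
  have h_shift := h_per.intervalIntegral_add_eq (-π) 0
  rw [show -π + 2 * π = π by ring, zero_add] at h_shift
  rw [← integral_Ioc_eq_integral_Ioo, ← intervalIntegral.integral_of_le (by linarith [pi_pos]),
    h_shift, circleAverage_def, smul_inv_smul₀ two_pi_pos.ne']

theorem setIntegral_ball_eq_intervalIntegral_circleAverage {φ : ℂ → E} (hφ : Continuous φ)
    (c : ℂ) {R : ℝ} (hR : 0 ≤ R) :
    ∫ z in ball c R, φ z = ∫ r in 0..R, (2 * π * r) • circleAverage φ c r := by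
  have h_translate : ∫ z in ball c R, φ z = ∫ z in ball 0 R, φ (c + z) := by
    rw [← (measurePreserving_add_left volume c).setIntegral_preimage_emb
      (measurableEmbedding_addLeft c), preimage_add_left_ball, neg_add_cancel]
  have h_center : ∀ r θ, c + circleMap 0 r θ = circleMap c r θ := fun r θ => by
    simp [circleMap]
  have h_int : IntegrableOn (fun p : ℝ × ℝ => p.1 • φ (circleMap c p.1 p.2))
      (Ioo 0 R ×ˢ Ioo (-π) π) :=
    ((by fun_prop : Continuous fun p : ℝ × ℝ => p.1 • φ (circleMap c p.1 p.2)
      ).continuousOn.integrableOn_compact (isCompact_Icc.prod isCompact_Icc)).mono_set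
      (prod_mono Ioo_subset_Icc_self Ioo_subset_Icc_self)
  rw [h_translate, setIntegral_ball_zero_eq_setIntegral_polar]
  simp only [h_center]
  rw [Measure.volume_eq_prod, setIntegral_prod _ h_int, intervalIntegral.integral_of_le hR,
    integral_Ioc_eq_integral_Ioo]
  refine setIntegral_congr_fun measurableSet_Ioo fun r _ => ?_
  rw [integral_smul, setIntegral_Ioo_circleMap_eq_circleAverage, smul_smul, mul_comm r]

end PolarCoordinates

theorem sq_norm_le_circleAverage {g : ℂ → ℂ} (hg : Differentiable ℂ g) (c : ℂ) (r : ℝ) :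
    ‖g c‖ ^ 2 ≤ circleAverage (fun z => ‖g z‖ ^ 2) c r := by
  have h_mean : circleAverage (fun z => g z ^ 2) c r = g c ^ 2 :=
    (hg.pow 2).diffContOnCl.circleAverage
  calc ‖g c‖ ^ 2 = ‖circleAverage (fun z => g z ^ 2) c r‖ := by rw [h_mean, norm_pow]
    _ ≤ circleAverage (fun z => ‖g z‖ ^ 2) c r := by
      simp only [circleAverage_def, norm_smul, ← norm_pow, smul_eq_mul]
      rw [norm_inv, Real.norm_of_nonneg two_pi_pos.le]
      gcongr
      exact intervalIntegral.norm_integral_le_integral_norm two_pi_pos.le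

theorem pi_mul_sq_mul_sq_norm_le_setIntegral_ball {g : ℂ → ℂ} (hg : Differentiable ℂ g) (c : ℂ)
    {R : ℝ} (hR : 0 ≤ R) : π * R ^ 2 * ‖g c‖ ^ 2 ≤ ∫ z in ball c R, ‖g z‖ ^ 2 := by
  have hφ : Continuous fun z => ‖g z‖ ^ 2 := hg.continuous.norm.pow 2
  rw [setIntegral_ball_eq_intervalIntegral_circleAverage hφ c hR]
  calc π * R ^ 2 * ‖g c‖ ^ 2 = ∫ r in 0..R, (2 * π * ‖g c‖ ^ 2) * r := by
        rw [intervalIntegral.integral_const_mul, integral_id]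
        ring
    _ ≤ ∫ r in 0..R, (2 * π * r) • circleAverage (fun z => ‖g z‖ ^ 2) c r := by
      have h_cont : Continuous fun r : ℝ => (2 * π * r) • circleAverage (fun z => ‖g z‖ ^ 2) c r :=
        by fun_prop
      refine intervalIntegral.integral_mono_on hR ((continuous_const_mul _).intervalIntegrable _ _)
        (h_cont.intervalIntegrable _ _) fun r hr => ?_
      rw [smul_eq_mul, mul_right_comm]
      exact mul_le_mul_of_nonneg_left (sq_norm_le_circleAverage hg c r)
        (by nlinarith [pi_pos, hr.1])

theorem integrable_norm_pow_mul_exp_neg_mul_sq {E : Type*} [NormedAddCommGroup E]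
    [NormedSpace ℝ E] [Nontrivial E] [FiniteDimensional ℝ E] [MeasurableSpace E] [BorelSpace E]
    (μ : Measure E) [μ.IsAddHaarMeasure] {b : ℝ} (hb : 0 < b) (m : ℕ) :
    Integrable (fun x : E => ‖x‖ ^ m * exp (-b * ‖x‖ ^ 2)) μ := by
  refine (integrable_fun_norm_addHaar μ (f := fun y => y ^ m * exp (-b * y ^ 2))).mpr ?_
  refine (integrableOn_rpow_mul_exp_neg_mul_sq hb (s := (Module.finrank ℝ E - 1 + m : ℕ))
    (neg_one_lt_zero.trans_le (Nat.cast_nonneg _))).congr_fun (fun y _ => ?_) measurableSet_Ioi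
  simp only [rpow_natCast, smul_eq_mul, pow_add]
  ring

theorem norm_cexp_neg_mul_sq_norm_div_two (a : ℝ) (z : ℂ) :
    ‖Complex.exp (-(a : ℂ) * (‖z‖ : ℂ) ^ 2 / 2)‖ = exp (-a * ‖z‖ ^ 2 / 2) := by
  rw [Complex.norm_exp]
  norm_cast

theorem memLp_two_pow_mul_cexp_neg_mul_sq_norm {a : ℝ} (ha : 0 < a) (i : ℕ) :
    MemLp (fun z : ℂ => z ^ i * Complex.exp (-(a : ℂ) * (‖z‖ : ℂ) ^ 2 / 2)) 2 := by
  refine (memLp_two_iff_integrable_sq_norm (by fun_prop)).mpr ?_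
  refine (integrable_norm_pow_mul_exp_neg_mul_sq volume ha (2 * i)).congr (.of_forall fun z => ?_)
  dsimp only
  rw [norm_mul, norm_cexp_neg_mul_sq_norm_div_two, norm_pow, mul_pow, ← pow_mul, ← exp_nat_mul]
  ring_nf

namespace MemHtilde

variable {k : ℕ} {f : ℂ → ℂ}

theorem eq_zero_of_index_eq_zero (hf : MemHtilde 0 f) : f = 0 := by
  obtain ⟨p, hp, hfp⟩ := hf
  rw [Nat.cast_zero, Nat.WithBot.lt_zero_iff, Polynomial.degree_eq_bot] at hp
  ext z
  simp [hfp, hp]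

theorem memLp_two (hf : MemHtilde k f) (hk : 0 < k) : MemLp f 2 := by
  obtain ⟨p, -, hfp⟩ := hf
  have hf_sum : f = fun z => ∑ i ∈ Finset.range (p.natDegree + 1),
      p.coeff i * (z ^ i * Complex.exp (-((k : ℝ) : ℂ) * (‖z‖ : ℂ) ^ 2 / 2)) := by
    ext z
    simp only [hfp, Polynomial.eval_eq_sum_range, Finset.sum_mul, Complex.ofReal_natCast,
      mul_assoc]
  rw [hf_sum]
  exact memLp_finsetSum _ fun i _ =>
    (memLp_two_pow_mul_cexp_neg_mul_sq_norm (Nat.cast_pos.mpr hk) i).const_mul _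

theorem exists_differentiable_norm_eq (hf : MemHtilde k f) (ζ : ℂ) :
    ∃ g : ℂ → ℂ, Differentiable ℂ g ∧ ∀ u, ‖g u‖ = ‖f u‖ * exp (k * ‖u - ζ‖ ^ 2 / 2) := by
  obtain ⟨p, -, hfp⟩ := hf
  -- `e^{k(|ζ|²/2 - ζ̄u)}` is `e^{-k|u|²/2} e^{k|u-ζ|²/2}` up to a unimodular factor.
  refine ⟨fun u => p.eval u * Complex.exp (k * ((‖ζ‖ : ℂ) ^ 2 / 2 - conj ζ * u)),
    p.differentiable.mul (by fun_prop), fun u => ?_⟩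
  have h_re : (k * ((‖ζ‖ : ℂ) ^ 2 / 2 - conj ζ * u)).re =
      -(k : ℝ) * ‖u‖ ^ 2 / 2 + k * ‖u - ζ‖ ^ 2 / 2 := by
    simp only [Complex.mul_re, Complex.sub_re, Complex.natCast_re, Complex.natCast_im,
      Complex.conj_re, Complex.conj_im, Complex.div_ofNat_re, ← Complex.ofReal_pow,
      Complex.ofReal_re, Complex.sq_norm, Complex.normSq_apply, Complex.sub_im]
    ring
  rw [hfp, norm_mul, norm_mul, mul_assoc, ← Complex.ofReal_natCast,
    norm_cexp_neg_mul_sq_norm_div_two, Complex.norm_exp, Complex.ofReal_natCast, h_re, exp_add]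

theorem sq_norm_le_integral (hf : MemHtilde k f) (hk : 0 < k) (ζ : ℂ) :
    ‖f ζ‖ ^ 2 ≤ exp 1 * k * ∫ u, ‖f u‖ ^ 2 ∂dA := by
  obtain ⟨g, hg, hgf⟩ := hf.exists_differentiable_norm_eq ζ
  have hk' : (0 : ℝ) < k := Nat.cast_pos.mpr hk
  set R := (√k)⁻¹
  have hR : R ^ 2 = (k : ℝ)⁻¹ := by rw [inv_pow, sq_sqrt hk'.le]
  have h_ball : ∀ u ∈ ball ζ R, ‖g u‖ ^ 2 ≤ exp 1 * ‖f u‖ ^ 2 := fun u hu => by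
    have hu' : k * ‖u - ζ‖ ^ 2 ≤ 1 := by
      rw [mem_ball, dist_eq_norm] at hu
      calc k * ‖u - ζ‖ ^ 2 ≤ k * R ^ 2 := by gcongr
        _ = 1 := by rw [hR, mul_inv_cancel₀ hk'.ne']
    rw [hgf, mul_pow, ← exp_nat_mul, mul_comm]
    gcongr
    push_cast
    linarith
  have h_int : Integrable fun u => ‖f u‖ ^ 2 :=
    (memLp_two_iff_integrable_sq_norm (hf.memLp_two hk).1).mp (hf.memLp_two hk)
  have h_dA : ∫ u, ‖f u‖ ^ 2 ∂dA = π⁻¹ * ∫ u, ‖f u‖ ^ 2 := by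
    rw [dA, integral_smul_measure, ENNReal.toReal_ofReal (by positivity), one_div, smul_eq_mul]
  have h_gζ : ‖g ζ‖ = ‖f ζ‖ := by simp [hgf]
  calc ‖f ζ‖ ^ 2 = k * π⁻¹ * (π * R ^ 2 * ‖g ζ‖ ^ 2) := by
        rw [hR, h_gζ]; field_simp
    _ ≤ k * π⁻¹ * ∫ u in ball ζ R, ‖g u‖ ^ 2 := by
        gcongr
        exact pi_mul_sq_mul_sq_norm_le_setIntegral_ball hg ζ (by positivity)
    _ ≤ k * π⁻¹ * ∫ u in ball ζ R, exp 1 * ‖f u‖ ^ 2 := by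
        have hg_int : IntegrableOn (fun u => ‖g u‖ ^ 2) (ball ζ R) :=
          ((hg.continuous.norm.pow 2).locallyIntegrable.integrableOn_isCompact
            (isCompact_closedBall ζ R)).mono_set ball_subset_closedBall
        exact mul_le_mul_of_nonneg_left (setIntegral_mono_on hg_int
          (h_int.const_mul _).integrableOn measurableSet_ball h_ball) (by positivity)
    _ ≤ k * π⁻¹ * (exp 1 * ∫ u, ‖f u‖ ^ 2) := by
        rw [integral_const_mul]
        gcongr ?_ * (_ * ?_)
        exact setIntegral_le_integral h_int (.of_forall fun u => by positivity)
    _ = exp 1 * k * ∫ u, ‖f u‖ ^ 2 ∂dA := by rw [h_dA]; ring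

theorem index_pos (hf : MemHtilde k f) {z : ℂ} (hz : f z ≠ 0) : 0 < k :=
  Nat.pos_of_ne_zero fun hk => hz (congrFun (hk ▸ hf).eq_zero_of_index_eq_zero z)

theorem one_le_mul_norm_sub (hf : MemHtilde k f) (hk : 0 < k) {B : ℝ}
    (hB : ∀ u, ‖f u‖ ^ 2 ≤ B) {z w : ℂ} (hz : f z = 1) (hw : f w = 0) :
    1 ≤ exp 1 * B * √k * ‖z - w‖ := by
  obtain ⟨g, hg, hgf⟩ := hf.exists_differentiable_norm_eq w
  have hk' : (0 : ℝ) < k := Nat.cast_pos.mpr hk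
  set R := (√k)⁻¹
  have hB1 : 1 ≤ B := by simpa [hz] using hB z
  have h_sq : ∀ u, ‖g u ^ 2‖ = ‖f u‖ ^ 2 * exp (k * ‖u - w‖ ^ 2) := fun u => by
    rw [norm_pow, hgf, mul_pow, ← exp_nat_mul]
    ring_nf
  have hgw : g w ^ 2 = 0 := by
    rw [← norm_eq_zero, h_sq, hw, norm_zero]
    ring
  have hgz : 1 ≤ ‖g z ^ 2‖ := by
    rw [h_sq, hz, norm_one, one_pow, one_mul]
    exact one_le_exp (by positivity)
  by_cases hzw : z ∈ ball w R
  · have h_maps :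
        MapsTo (fun u => g u ^ 2) (ball w R) (closedBall (g w ^ 2) (exp 1 * B)) := by
      intro u hu
      rw [hgw, mem_closedBall, dist_zero_right, h_sq, mul_comm (exp 1)]
      rw [mem_ball, dist_eq_norm] at hu
      have hu' : k * ‖u - w‖ ^ 2 ≤ 1 := by
        calc k * ‖u - w‖ ^ 2 ≤ k * R ^ 2 := by gcongr
          _ = 1 := by rw [inv_pow, sq_sqrt hk'.le, mul_inv_cancel₀ hk'.ne']
      gcongr
      exact hB u
    have h_schwarz := Complex.dist_le_div_mul_dist_of_mapsTo_ball (f := fun u => g u ^ 2)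
      (hg.pow 2).differentiableOn h_maps hzw
    rw [hgw, dist_zero_right, dist_eq_norm, div_inv_eq_mul] at h_schwarz
    linarith
  · rw [mem_ball, dist_eq_norm, not_lt] at hzw
    calc 1 ≤ exp 1 * B := one_le_mul_of_one_le_of_one_le (one_le_exp zero_le_one) hB1
      _ = exp 1 * B * √k * R := by
        rw [mul_assoc _ √k, mul_inv_cancel₀ (by positivity), mul_one]
      _ ≤ exp 1 * B * √k * ‖z - w‖ := by gcongr

theorem one_le_integral_mul_norm_sub (hf : MemHtilde k f) {z w : ℂ} (hz : f z = 1)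
    (hw : f w = 0) : 1 ≤ exp 1 ^ 2 * (k * √k) * (∫ u, ‖f u‖ ^ 2 ∂dA) * ‖z - w‖ := by
  have hk := hf.index_pos (hz ▸ one_ne_zero)
  have h := hf.one_le_mul_norm_sub hk (hf.sq_norm_le_integral hk) hz hw
  linarith

end MemHtilde

namespace IsInterpolating

variable {ρ : ℝ} {Z : ℕ → Finset ℂ}

theorem exists_one_le_mul_sqrt_mul_norm_sub (hρ : 0 < ρ) (hI : IsInterpolating ρ Z) :
    ∃ A : ℝ, 0 < A ∧ ∀ n : ℕ, 1 ≤ n → ∀ z ∈ Z n, ∀ w ∈ Z n, z ≠ w →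
      1 ≤ A * √n * ‖z - w‖ := by
  obtain ⟨C, hC⟩ := hI
  set C' := max C 1
  refine ⟨exp 1 ^ 2 * C' * √ρ, by positivity, fun n hn z hz w hw hzw => ?_⟩
  obtain ⟨f, hf, hfZ, hf_norm⟩ := hC n hn fun u => if u = z then 1 else 0
  have hfz : f z = 1 := by simp [hfZ z hz]
  have hfw : f w = 0 := by simp [hfZ w hw, hzw.symm]
  have hL2 : ∫ u, ‖f u‖ ^ 2 ∂dA ≤ C / (n * ρ) := by
    rwa [Finset.sum_eq_single_of_mem z hz fun u _ hu => by simp [hu], if_pos rfl, norm_one,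
      one_pow, mul_one] at hf_norm
  have hk : (HkIdx ρ n : ℝ) ≤ ρ * n := Nat.floor_le (by positivity)
  have h_bound : (HkIdx ρ n : ℝ) * √(HkIdx ρ n) * ∫ u, ‖f u‖ ^ 2 ∂dA ≤ C' * (√ρ * √n) := by
    calc (HkIdx ρ n : ℝ) * √(HkIdx ρ n) * ∫ u, ‖f u‖ ^ 2 ∂dA
        ≤ ρ * n * √(ρ * n) * (C / (n * ρ)) := by gcongr
      _ = C * (√ρ * √n) := by rw [sqrt_mul hρ.le]; field_simp
      _ ≤ C' * (√ρ * √n) := by gcongr; exact le_max_left C 1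
  calc 1 ≤ _ := hf.one_le_integral_mul_norm_sub hfz hfw
    _ = exp 1 ^ 2 * (HkIdx ρ n * √(HkIdx ρ n) * ∫ u, ‖f u‖ ^ 2 ∂dA) * ‖z - w‖ := by ring
    _ ≤ exp 1 ^ 2 * (C' * (√ρ * √n)) * ‖z - w‖ := by gcongr
    _ = _ := by ring

end IsInterpolating

theorem interpolating_uniformly_separated
    (ρ : ℝ) (hρ : 0 < ρ) (Z : ℕ → Finset ℂ)
    (hI : IsInterpolating ρ Z) :
    ∃ s : ℝ, 0 < s ∧ ∀ n : ℕ, 1 ≤ n → ∀ z ∈ Z n, ∀ w ∈ Z n, z ≠ w →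
      s / Real.sqrt n < ‖z - w‖ := by
  obtain ⟨A, hA, h_sep⟩ := hI.exists_one_le_mul_sqrt_mul_norm_sub hρ
  refine ⟨(2 * A)⁻¹, by positivity, fun n hn z hz w hw hzw => ?_⟩
  have hn' : (0 : ℝ) < √n := sqrt_pos.mpr (Nat.cast_pos.mpr hn)
  have h := h_sep n hn z hz w hw hzw
  rw [div_lt_iff₀ hn', inv_lt_iff_one_lt_mul₀ (by positivity)]
  nlinarith
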